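/- arXiv:2003.13651 — 3 statements merged into one kernel-verified Lean document; each statement's English description precedes it below -/
import Mathlib

section
/- In the logic QRC₁, for any formula φ and variables x, y such that y is free for x in φ and y∉fv(φ), the sequent ∀xφ ⊢ ∀y(φ[x/y]) is derivable. -/
/-- A signature: constants and relation symbols with arities (no function symbols). -/
structure Signature where
  Const : Type
  Rel : Type
  arity : Rel → ℕ

/-- Terms: variables (numbered) or constants. -/
inductive Term (Sig : Signature) : Type where
  | var : ℕ → Term Sig
  | const : Sig.Const → Term Sig

/-- Strictly positive formulas of QRC₁. -/
inductive Formula (Sig : Signature) : Type where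
  | top : Formula Sig
  | rel : (S : Sig.Rel) → (Fin (Sig.arity S) → Term Sig) → Formula Sig
  | and : Formula Sig → Formula Sig → Formula Sig
  | dia : Formula Sig → Formula Sig
  | all : ℕ → Formula Sig → Formula Sig

namespace Term

variable {Sig : Signature}

def fv : Term Sig → Set ℕ
  | var x => {x}
  | const _ => ∅

def consts : Term Sig → Set Sig.Const
  | var _ => ∅
  | const c => {c}

def subst (t : Term Sig) (x : ℕ) (u : Term Sig) : Term Sig :=
  match t with
  | var y => if y = x then u else var y
  | const c => const c

end Term

namespace Formula

variable {Sig : Signature}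

/-- Free variables of a formula. -/
def fv : Formula Sig → Set ℕ
  | top => ∅
  | rel _ ts => ⋃ i, (ts i).fv
  | and φ ψ => φ.fv ∪ ψ.fv
  | dia φ => φ.fv
  | all x φ => φ.fv \ {x}

/-- Constants occurring in a formula. -/
def consts : Formula Sig → Set Sig.Const
  | top => ∅
  | rel _ ts => ⋃ i, (ts i).consts
  | and φ ψ => φ.consts ∪ ψ.consts
  | dia φ => φ.consts
  | all _ φ => φ.consts

/-- Simultaneous substitution of the term `u` for the free occurrences of `x`. -/
def subst : Formula Sig → ℕ → Term Sig → Formula Sig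
  | top, _, _ => top
  | rel S ts, x, u => rel S (fun i => (ts i).subst x u)
  | and φ ψ, x, u => and (φ.subst x u) (ψ.subst x u)
  | dia φ, x, u => dia (φ.subst x u)
  | all y φ, x, u => if y = x then all y φ else all y (φ.subst x u)

/-- `t` is free for `x` in `φ`: no free variable of `t` becomes bound in `φ[x/t]`. -/
def freeFor : Formula Sig → ℕ → Term Sig → Prop
  | top, _, _ => True
  | rel _ _, _, _ => True
  | and φ ψ, x, t => φ.freeFor x t ∧ ψ.freeFor x t
  | dia φ, x, t => φ.freeFor x t
  | all y φ, x, t => x ∉ (Formula.all y φ).fv ∨ (y ∉ t.fv ∧ φ.freeFor x t)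

/-- Modal depth. -/
def mdepth : Formula Sig → ℕ
  | top => 0
  | rel _ _ => 0
  | and φ ψ => max φ.mdepth ψ.mdepth
  | dia φ => φ.mdepth + 1
  | all _ φ => φ.mdepth

def size : Formula Sig → ℕ
  | top => 1
  | rel _ _ => 1
  | and φ ψ => φ.size + ψ.size + 1
  | dia φ => φ.size + 1
  | all _ φ => φ.size + 1

theorem size_subst (φ : Formula Sig) (x : ℕ) (t : Term Sig) :
    (φ.subst x t).size = φ.size := by
  induction φ with
  | top => rfl
  | rel S ts => rfl
  | and φ ψ ihφ ihψ => simp [Formula.subst, Formula.size, ihφ, ihψ]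
  | dia φ ih => simp [Formula.subst, Formula.size, ih]
  | all y φ ih =>
      by_cases h : y = x <;> simp [Formula.subst, Formula.size, h, ih]

end Formula

/-- Derivability of sequents `φ ⊢ ψ` in QRC₁. -/
inductive Derives {Sig : Signature} : Formula Sig → Formula Sig → Prop where
  | topIntro (φ : Formula Sig) : Derives φ .top
  | refl (φ : Formula Sig) : Derives φ φ
  | andE₁ (φ ψ : Formula Sig) : Derives (.and φ ψ) φ
  | andE₂ (φ ψ : Formula Sig) : Derives (.and φ ψ) ψ
  | andI {φ ψ χ : Formula Sig} : Derives φ ψ → Derives φ χ → Derives φ (.and ψ χ)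
  | cut {φ ψ χ : Formula Sig} : Derives φ ψ → Derives ψ χ → Derives φ χ
  | nec {φ ψ : Formula Sig} : Derives φ ψ → Derives (.dia φ) (.dia ψ)
  | diaTrans (φ : Formula Sig) : Derives (.dia (.dia φ)) (.dia φ)
  | diaAll (x : ℕ) (φ : Formula Sig) : Derives (.dia (.all x φ)) (.all x (.dia φ))
  | allR {φ ψ : Formula Sig} {x : ℕ} : Derives φ ψ → x ∉ φ.fv → Derives φ (.all x ψ)
  | allL {φ ψ : Formula Sig} {x : ℕ} {t : Term Sig} :
      Derives (φ.subst x t) ψ → φ.freeFor x t → Derives (.all x φ) ψ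
  | termInst {φ ψ : Formula Sig} {x : ℕ} {t : Term Sig} :
      Derives φ ψ → φ.freeFor x t → ψ.freeFor x t →
      Derives (φ.subst x t) (ψ.subst x t)
  | constGen {φ ψ : Formula Sig} {x : ℕ} {c : Sig.Const} :
      Derives (φ.subst x (.const c)) (ψ.subst x (.const c)) →
      c ∉ φ.consts → c ∉ ψ.consts → Derives φ ψ

/-- Extension of a signature by a collection `C` of new constants. -/
def Signature.extend (Sig : Signature) (C : Type) : Signature :=
  ⟨Sig.Const ⊕ C, Sig.Rel, Sig.arity⟩

/-- A term of `Sig` seen as a term of the extended signature. -/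
def Term.lift {Sig : Signature} {C : Type} : Term Sig → Term (Sig.extend C)
  | .var x => .var x
  | .const c => .const (Sum.inl c)

/-- A formula of `Sig` seen as a formula of the extended signature. -/
def Formula.lift {Sig : Signature} {C : Type} : Formula Sig → Formula (Sig.extend C)
  | .top => .top
  | .rel S ts => .rel S (fun i => (ts i).lift)
  | .and φ ψ => .and φ.lift ψ.lift
  | .dia φ => .dia φ.lift
  | .all x φ => .all x φ.lift

/-! ### Relational semantics -/

/-- A relational model (on an underlying frame `⟨W, R, D⟩`):
worlds, accessibility, finite domains, constant and relation interpretations. -/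
structure Model (Sig : Signature) where
  W : Type
  U : Type
  nonempty : Nonempty W
  R : W → W → Prop
  D : W → Set U
  Dfin : ∀ w, (D w).Finite
  I : W → Sig.Const → U
  Imem : ∀ w c, I w c ∈ D w
  J : (w : W) → (S : Sig.Rel) → Set (Fin (Sig.arity S) → U)
  Jmem : ∀ w S f, f ∈ J w S → ∀ i, f i ∈ D w

namespace Model

variable {Sig : Signature}

/-- A `w`-assignment: a map from variables into the domain of `w`. -/
def IsAssignment (M : Model Sig) (w : M.W) (g : ℕ → M.U) : Prop :=
  ∀ n, g n ∈ M.D w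

/-- Value of a term at a world under an assignment. -/
def tval (M : Model Sig) (w : M.W) (g : ℕ → M.U) : Term Sig → M.U
  | .var x => g x
  | .const c => M.I w c

end Model

/-- `Γ`-alternative assignments: they agree on all variables outside `Γ`. -/
def AltOn {U : Type} (Γ : Set ℕ) (g h : ℕ → U) : Prop :=
  ∀ y, y ∉ Γ → g y = h y

/-- Truth at a world under an assignment. -/
def Model.Forces {Sig : Signature} (M : Model Sig) :
    M.W → (ℕ → M.U) → Formula Sig → Prop
  | _, _, .top => True
  | w, g, .rel S ts => (fun i => M.tval w g (ts i)) ∈ M.J w S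
  | w, g, .and φ ψ => M.Forces w g φ ∧ M.Forces w g ψ
  | w, g, .dia φ => ∃ v, M.R w v ∧ M.Forces v g φ
  | w, g, .all x φ =>
      ∀ h : ℕ → M.U, M.IsAssignment w h → AltOn {x} g h → M.Forces w h φ

/-- Adequate models: inclusive, transitive, and concordant. -/
def Model.Adequate {Sig : Signature} (M : Model Sig) : Prop :=
  (∀ w u, M.R w u → M.D w ⊆ M.D u) ∧
  (∀ w u v, M.R w u → M.R u v → M.R w v) ∧
  (∀ w u, M.R w u → ∀ c, M.I w c = M.I u c)

/-- The model `M` restricted at the world `r`. -/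
def Model.restrict {Sig : Signature} (M : Model Sig) (r : M.W) : Model Sig where
  W := {w : M.W // w = r ∨ M.R r w}
  U := M.U
  nonempty := ⟨⟨r, Or.inl rfl⟩⟩
  R w v := M.R w.1 v.1
  D w := M.D w.1
  Dfin w := M.Dfin w.1
  I w c := M.I w.1 c
  Imem w c := M.Imem w.1 c
  J w S := M.J w.1 S
  Jmem w S f h i := M.Jmem w.1 S f h i

/-- The model `M` restricted at `r`, with the interpretation of the constant `c`
set to `d ∈ M_r` at every world. -/
noncomputable def Model.restrictSubst {Sig : Signature} (M : Model Sig) (r : M.W) (c : Sig.Const)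
    (d : M.U) (hd : d ∈ M.D r) (hinc : ∀ w u, M.R w u → M.D w ⊆ M.D u) : Model Sig :=
  { M.restrict r with
    I := fun w c' => @ite _ (c' = c) (Classical.propDecidable _) d (M.I w.1 c')
    Imem := by
      intro w c'
      by_cases h : c' = c
      · simp only [h, if_pos rfl]
        rcases w.2 with h' | h'
        · show d ∈ M.D w.1; rw [h']; exact hd
        · exact hinc r w.1 h' hd
      · show (@ite _ (c' = c) (Classical.propDecidable _) d (M.I w.1 c')) ∈ M.D w.1
        rw [if_neg h]
        exact M.Imem w.1 c' }

/-! ### Pairs, closure, maximal consistency -/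

/-- A pair of sets of formulas (positive and negative part). -/
structure Pair (Sig : Signature) where
  pos : Set (Formula Sig)
  neg : Set (Formula Sig)

/-- `Γ ⊢ φ`: some finite conjunction of members of `Γ` derives `φ`. -/
def SetDerives {Sig : Signature} (Γ : Set (Formula Sig)) (φ : Formula Sig) : Prop :=
  ∃ (γ : Formula Sig) (l : List (Formula Sig)),
    γ ∈ Γ ∧ (∀ δ ∈ l, δ ∈ Γ) ∧ Derives (l.foldl Formula.and γ) φ

namespace Pair

variable {Sig : Signature}

/-- A pair is consistent if no member of the negative part follows from the positive part. -/
def Consistent (p : Pair Sig) : Prop :=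
  ∀ δ ∈ p.neg, ¬ SetDerives p.pos δ

/-- `q` is a `Φ`-extension of `p`. -/
def Ext (p q : Pair Sig) (Φ : Set (Formula Sig)) : Prop :=
  p.pos ⊆ q.pos ∧ q.pos ⊆ Φ ∧ p.neg ⊆ q.neg ∧ q.neg ⊆ Φ

/-- `Φ`-maximal consistency. -/
def MaxCons (p : Pair Sig) (Φ : Set (Formula Sig)) : Prop :=
  p.Consistent ∧ p.pos ⊆ Φ ∧ p.neg ⊆ Φ ∧
    ∀ q : Pair Sig, p.Ext q Φ → q.Consistent → q = p

/-- A pair is fully witnessed if every negative universal has a constant witness. -/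
def FullyWitnessed (p : Pair Sig) : Prop :=
  ∀ (x : ℕ) (φ : Formula Sig), Formula.all x φ ∈ p.neg →
    ∃ c : Sig.Const, φ.subst x (.const c) ∈ p.neg

end Pair

/-- Closure of a formula under a set of constants. -/
def Cl {Sig : Signature} (C : Set Sig.Const) : Formula Sig → Set (Formula Sig)
  | .top => {.top}
  | .rel S ts => {.rel S ts, .top}
  | .and φ ψ => {.and φ ψ} ∪ Cl C φ ∪ Cl C ψ
  | .dia φ => {.dia φ} ∪ Cl C φ
  | .all x φ => {.all x φ} ∪ ⋃ c ∈ C, Cl C (φ.subst x (.const c))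
termination_by φ => φ.size
decreasing_by
  all_goals simp [Formula.size, Formula.size_subst]
  all_goals omega

/-- Closure of a set of formulas under a set of constants. -/
def ClSet {Sig : Signature} (C : Set Sig.Const) (Γ : Set (Formula Sig)) :
    Set (Formula Sig) :=
  ⋃ φ ∈ Γ, Cl C φ

/-- Modal depth of a set of formulas (as a supremum in ℕ). -/
noncomputable def mdepthSet {Sig : Signature} (Γ : Set (Formula Sig)) : ℕ :=
  sSup (Formula.mdepth '' Γ)

/-- The relation `R̂` between pairs. -/
def hatR {Sig : Signature} (p q : Pair Sig) : Prop :=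
  (∀ φ : Formula Sig, Formula.dia φ ∈ p.neg → φ ∈ q.neg ∧ Formula.dia φ ∈ q.neg) ∧
  (∃ ψ : Formula Sig, Formula.dia ψ ∈ p.pos ∧ Formula.dia ψ ∈ q.neg)

/-- In QRC₁, if y is free for x in φ and y ∉ fv(φ), then
∀xφ ⊢ ∀y(φ[x/y]) is derivable. -/
theorem qrc1_alpha_rename (Sig : Signature) (φ : Formula Sig) (x y : ℕ)
    (h1 : φ.freeFor x (Term.var y)) (h2 : y ∉ φ.fv) :
    Derives (Formula.all x φ) (Formula.all y (φ.subst x (Term.var y))) :=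
  Derives.allR (Derives.allL (Derives.refl _) h1) fun hy => h2 hy.1
end

section
/- Relational soundness of QRC₁: if φ ⊢ ψ is derivable in QRC₁, then for every adequate relational model M, every world w of M, and every w-assignment g, if M,w ⊩^g φ then M,w ⊩^g ψ. -/
/-!
Soundness is proved by induction on derivations, each rule preserving truth in adequate models.
The quantifier rules rest on the substitution lemma `M,w ⊩^g φ[x/t] ↔ M,w ⊩^{g[x ↦ g(t)]} φ`:
concordance makes `t` denote the same element at every accessible world, and inclusiveness
turns a `w`-assignment into a `v`-assignment whenever `wRv`. For the rule of constant
generalization, reinterpret the fresh constant `c` as `g(x)` in the submodel generated by `w`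
(inclusiveness keeps `g(x)` in all of its domains); since `c` occurs in neither `φ` nor `ψ`,
their truth values do not change.
-/

theorem Term.subst_of_notMem_fv {Sig : Signature} {t : Term Sig} {x : ℕ} (u : Term Sig)
    (h : x ∉ t.fv) : t.subst x u = t := by
  cases t with
  | var y =>
    have hyx : y ≠ x := fun e => h (e ▸ rfl)
    simp [Term.subst, hyx]
  | const c => rfl

namespace Formula

variable {Sig : Signature}

theorem subst_of_notMem_fv {φ : Formula Sig} {x : ℕ} (u : Term Sig) (h : x ∉ φ.fv) :
    φ.subst x u = φ := by
  induction φ with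
  | top => rfl
  | rel S ts =>
    simp only [subst, rel.injEq, heq_eq_eq, true_and]
    exact funext fun i => Term.subst_of_notMem_fv u fun hx => h (Set.mem_iUnion.2 ⟨i, hx⟩)
  | and φ ψ ihφ ihψ =>
    simp only [subst, ihφ fun hx => h (Or.inl hx), ihψ fun hx => h (Or.inr hx)]
  | dia φ ih => simp only [subst, ih h]
  | all y φ ih =>
    rcases eq_or_ne y x with rfl | hyx
    · simp [subst]
    · simp [subst, hyx, ih fun hx => h ⟨hx, hyx.symm⟩]

theorem freeFor_const (φ : Formula Sig) (x : ℕ) (c : Sig.Const) : φ.freeFor x (.const c) := by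
  induction φ with
  | top | rel => trivial
  | and φ ψ ihφ ihψ => exact ⟨ihφ, ihψ⟩
  | dia φ ih => exact ih
  | all y φ ih => exact Or.inr ⟨by simp [Term.fv], ih⟩

end Formula

theorem AltOn.eq_update {U : Type} {x : ℕ} {g h : ℕ → U} (hgh : AltOn {x} g h) :
    h = Function.update g x (h x) := by
  funext z
  rcases eq_or_ne z x with rfl | hzx
  · simp
  · simp [hzx, hgh z hzx]

theorem altOn_update {U : Type} (g : ℕ → U) (x : ℕ) (d : U) :
    AltOn {x} g (Function.update g x d) :=
  fun _ hz => (Function.update_of_ne hz d g).symm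

namespace Model

variable {Sig : Signature} {M : Model Sig} {w v : M.W} {g : ℕ → M.U}

def Inclusive (M : Model Sig) : Prop :=
  ∀ w u, M.R w u → M.D w ⊆ M.D u

def Concordant (M : Model Sig) : Prop :=
  ∀ w u, M.R w u → ∀ c, M.I w c = M.I u c

theorem Adequate.inclusive (hM : M.Adequate) : M.Inclusive := hM.1

theorem Adequate.trans (hM : M.Adequate) : ∀ w u v, M.R w u → M.R u v → M.R w v := hM.2.1

theorem Adequate.concordant (hM : M.Adequate) : M.Concordant := hM.2.2

theorem IsAssignment.mono (hg : M.IsAssignment w g) (hinc : M.Inclusive) (hwv : M.R w v) :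
    M.IsAssignment v g :=
  fun n => hinc w v hwv (hg n)

theorem IsAssignment.update (hg : M.IsAssignment w g) {x : ℕ} {d : M.U} (hd : d ∈ M.D w) :
    M.IsAssignment w (Function.update g x d) := by
  intro n
  rcases eq_or_ne n x with rfl | hnx
  · simpa using hd
  · simpa [hnx] using hg n

theorem tval_mem (hg : M.IsAssignment w g) (t : Term Sig) : M.tval w g t ∈ M.D w := by
  cases t with
  | var y => exact hg y
  | const c => exact M.Imem w c

theorem tval_congr {g h : ℕ → M.U} (t : Term Sig) (hgh : ∀ z ∈ t.fv, g z = h z) :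
    M.tval w g t = M.tval w h t := by
  cases t with
  | var y => exact hgh y rfl
  | const c => rfl

theorem tval_eq_of_R (hcon : M.Concordant) (hwv : M.R w v) (g : ℕ → M.U) (t : Term Sig) :
    M.tval v g t = M.tval w g t := by
  cases t with
  | var y => rfl
  | const c => exact (hcon w v hwv c).symm

theorem tval_subst (g : ℕ → M.U) (s : Term Sig) (x : ℕ) (t : Term Sig) :
    M.tval w g (s.subst x t) = M.tval w (Function.update g x (M.tval w g t)) s := by
  cases s with
  | var y => rcases eq_or_ne y x with rfl | hyx <;> simp [Term.subst, tval, *]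
  | const c => rfl

theorem forces_all_iff (hg : M.IsAssignment w g) (x : ℕ) (φ : Formula Sig) :
    M.Forces w g (.all x φ) ↔ ∀ d ∈ M.D w, M.Forces w (Function.update g x d) φ := by
  constructor
  · intro H d hd
    exact H _ (hg.update hd) (altOn_update g x d)
  · intro H h hh hgh
    rw [hgh.eq_update]
    exact H _ (hh x)

theorem forces_congr (hinc : M.Inclusive) {φ : Formula Sig} {g h : ℕ → M.U}
    (hg : M.IsAssignment w g) (hh : M.IsAssignment w h) (hgh : ∀ z ∈ φ.fv, g z = h z) :
    M.Forces w g φ ↔ M.Forces w h φ := by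
  induction φ generalizing w g h with
  | top => exact Iff.rfl
  | rel S ts =>
    have hts : (fun i => M.tval w g (ts i)) = fun i => M.tval w h (ts i) :=
      funext fun i => tval_congr (ts i) fun z hz => hgh z (Set.mem_iUnion.2 ⟨i, hz⟩)
    simp only [Forces, hts]
  | and φ ψ ihφ ihψ =>
    exact and_congr (ihφ hg hh fun z hz => hgh z (Or.inl hz))
      (ihψ hg hh fun z hz => hgh z (Or.inr hz))
  | dia φ ih =>
    exact exists_congr fun v => and_congr_right fun hwv =>
      ih (hg.mono hinc hwv) (hh.mono hinc hwv) hgh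
  | all x φ ih =>
    rw [forces_all_iff hg, forces_all_iff hh]
    refine forall₂_congr fun d hd => ih (hg.update hd) (hh.update hd) fun z hz => ?_
    rcases eq_or_ne z x with rfl | hzx
    · simp
    · simp [hzx, hgh z ⟨hz, hzx⟩]

theorem forces_subst (hinc : M.Inclusive) (hcon : M.Concordant) {φ : Formula Sig} {x : ℕ}
    {t : Term Sig} (hφ : φ.freeFor x t) (hg : M.IsAssignment w g) :
    M.Forces w g (φ.subst x t) ↔ M.Forces w (Function.update g x (M.tval w g t)) φ := by
  induction φ generalizing w g with
  | top => exact Iff.rfl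
  | rel S ts => simp only [Formula.subst, Forces, tval_subst]
  | and φ ψ ihφ ihψ => exact and_congr (ihφ hφ.1 hg) (ihψ hφ.2 hg)
  | dia φ ih =>
    refine exists_congr fun v => and_congr_right fun hwv => ?_
    rw [ih hφ (hg.mono hinc hwv), tval_eq_of_R hcon hwv]
  | all y φ ih =>
    have hupd : M.IsAssignment w (Function.update g x (M.tval w g t)) := hg.update (tval_mem hg t)
    by_cases hx : x ∈ (Formula.all y φ).fv
    · obtain ⟨hyt, hφ⟩ := hφ.resolve_left (not_not.2 hx)
      have hyx : y ≠ x := fun e => hx.2 e.symm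
      simp only [Formula.subst, if_neg hyx]
      rw [forces_all_iff hg, forces_all_iff hupd]
      refine forall₂_congr fun d hd => ?_
      have htd : M.tval w (Function.update g y d) t = M.tval w g t :=
        tval_congr t fun z hz => Function.update_of_ne (ne_of_mem_of_not_mem hz hyt) d g
      rw [ih hφ (hg.update hd), htd, Function.update_comm hyx]
    · rw [Formula.subst_of_notMem_fv t hx]
      refine forces_congr hinc hg hupd fun z hz => ?_
      exact (Function.update_of_ne (ne_of_mem_of_not_mem hz hx) _ g).symm

section RestrictSubst

variable {r : M.W} {c : Sig.Const} {d : M.U} {hd : d ∈ M.D r} {hinc : M.Inclusive}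

theorem restrictSubst_I_self (w : (M.restrictSubst r c d hd hinc).W) :
    (M.restrictSubst r c d hd hinc).I w c = d :=
  if_pos rfl

theorem restrictSubst_I_of_ne (w : (M.restrictSubst r c d hd hinc).W) {c' : Sig.Const}
    (hc' : c' ≠ c) : (M.restrictSubst r c d hd hinc).I w c' = M.I w.1 c' :=
  if_neg hc'

theorem restrictSubst_adequate (hM : M.Adequate) :
    (M.restrictSubst r c d hd hM.inclusive).Adequate := by
  refine ⟨fun w u hwu => hM.inclusive w.1 u.1 hwu, fun w u v => hM.trans w.1 u.1 v.1, ?_⟩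
  intro w u hwu c'
  rcases eq_or_ne c' c with rfl | hc'
  · rw [restrictSubst_I_self, restrictSubst_I_self]
  · rw [restrictSubst_I_of_ne w hc', restrictSubst_I_of_ne u hc']
    exact hM.concordant w.1 u.1 hwu c'

theorem restrictSubst_tval (w : (M.restrictSubst r c d hd hinc).W) (g : ℕ → M.U) {t : Term Sig}
    (hc : c ∉ t.consts) : (M.restrictSubst r c d hd hinc).tval w g t = M.tval w.1 g t := by
  cases t with
  | var y => rfl
  | const c' => exact restrictSubst_I_of_ne w fun e => hc (e ▸ rfl)

theorem restrictSubst_forces (htrans : ∀ w u v, M.R w u → M.R u v → M.R w v)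
    {χ : Formula Sig} (hc : c ∉ χ.consts) (w : (M.restrictSubst r c d hd hinc).W)
    (g : ℕ → M.U) :
    (M.restrictSubst r c d hd hinc).Forces w g χ ↔ M.Forces w.1 g χ := by
  induction χ generalizing w g with
  | top => exact Iff.rfl
  | rel S ts =>
    have hts : (fun i => (M.restrictSubst r c d hd hinc).tval w g (ts i)) =
        fun i => M.tval w.1 g (ts i) :=
      funext fun i => restrictSubst_tval w g fun h => hc (Set.mem_iUnion.2 ⟨i, h⟩)
    exact iff_of_eq (congrArg (· ∈ M.J w.1 S) hts)
  | and φ ψ ihφ ihψ =>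
    exact and_congr (ihφ (fun h => hc (Or.inl h)) w g) (ihψ (fun h => hc (Or.inr h)) w g)
  | dia φ ih =>
    constructor
    · rintro ⟨v, hwv, hv⟩
      exact ⟨v.1, hwv, (ih hc v g).1 hv⟩
    · rintro ⟨v, hwv, hv⟩
      have hrv : v = r ∨ M.R r v := by
        rcases w.2 with hwr | hrw
        · exact Or.inr (hwr ▸ hwv)
        · exact Or.inr (htrans r w.1 v hrw hwv)
      exact ⟨⟨v, hrv⟩, hwv, (ih hc ⟨v, hrv⟩ g).2 hv⟩
  | all x φ ih => exact forall_congr' fun h => forall₂_congr fun _ _ => ih hc w h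

end RestrictSubst

end Model

namespace Formula

variable {Sig : Signature} {φ ψ : Formula Sig}

def Entails (φ ψ : Formula Sig) : Prop :=
  ∀ (M : Model Sig), M.Adequate → ∀ (w : M.W) (g : ℕ → M.U),
    M.IsAssignment w g → M.Forces w g φ → M.Forces w g ψ

theorem Entails.dia (h : Entails φ ψ) : Entails (.dia φ) (.dia ψ) :=
  fun M hM _ g hg ⟨v, hwv, hv⟩ => ⟨v, hwv, h M hM v g (hg.mono hM.inclusive hwv) hv⟩

theorem entails_dia_dia (φ : Formula Sig) : Entails (.dia (.dia φ)) (.dia φ) :=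
  fun _ hM w _ _ ⟨v, hwv, u, hvu, hu⟩ => ⟨u, hM.trans w v u hwv hvu, hu⟩

theorem entails_dia_all (x : ℕ) (φ : Formula Sig) : Entails (.dia (.all x φ)) (.all x (.dia φ)) :=
  fun _ hM _ _ _ ⟨v, hwv, hv⟩ h hh hgh => ⟨v, hwv, hv h (hh.mono hM.inclusive hwv) hgh⟩

theorem Entails.all_right {x : ℕ} (h : Entails φ ψ) (hx : x ∉ φ.fv) : Entails φ (.all x ψ) := by
  intro M hM w g hg hφ k hk hgk
  refine h M hM w k hk ((M.forces_congr hM.inclusive hg hk fun z hz => hgk z ?_).1 hφ)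
  exact fun hzx => hx (Set.mem_singleton_iff.1 hzx ▸ hz)

theorem Entails.all_left {x : ℕ} {t : Term Sig} (h : Entails (φ.subst x t) ψ)
    (hφ : φ.freeFor x t) : Entails (.all x φ) ψ := by
  intro M hM w g hg hall
  refine h M hM w g hg ((M.forces_subst hM.inclusive hM.concordant hφ hg).2 ?_)
  exact (M.forces_all_iff hg x φ).1 hall _ (M.tval_mem hg t)

theorem Entails.subst {x : ℕ} {t : Term Sig} (h : Entails φ ψ) (hφ : φ.freeFor x t)
    (hψ : ψ.freeFor x t) : Entails (φ.subst x t) (ψ.subst x t) := by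
  intro M hM w g hg hφt
  rw [M.forces_subst hM.inclusive hM.concordant hφ hg] at hφt
  rw [M.forces_subst hM.inclusive hM.concordant hψ hg]
  exact h M hM w _ (hg.update (M.tval_mem hg t)) hφt

theorem Entails.of_subst_const {x : ℕ} {c : Sig.Const}
    (h : Entails (φ.subst x (.const c)) (ψ.subst x (.const c))) (hφ : c ∉ φ.consts)
    (hψ : c ∉ ψ.consts) : Entails φ ψ := by
  intro M hM w g hg hφw
  let M' := M.restrictSubst w c (g x) (hg x) hM.inclusive
  have hM' : M'.Adequate := Model.restrictSubst_adequate hM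
  let w' : M'.W := ⟨w, Or.inl rfl⟩
  have hg' : M'.IsAssignment w' g := hg
  have hcx : M'.tval w' g (.const c) = g x := Model.restrictSubst_I_self w'
  have key : ∀ χ : Formula Sig, c ∉ χ.consts →
      (M'.Forces w' g (χ.subst x (.const c)) ↔ M.Forces w g χ) := by
    intro χ hχ
    rw [M'.forces_subst hM'.inclusive hM'.concordant (χ.freeFor_const x c) hg']
    rw [hcx, show (Function.update g x (g x) : ℕ → M'.U) = g from Function.update_eq_self x g]
    exact Model.restrictSubst_forces hM.trans hχ w' g
  exact (key ψ hψ).1 (h M' hM' w' g hg' ((key φ hφ).2 hφw))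

end Formula

/-- Relational soundness of QRC₁. -/
theorem qrc1_relational_soundness (Sig : Signature) (φ ψ : Formula Sig)
    (h : Derives φ ψ) :
    ∀ (M : Model Sig), M.Adequate → ∀ (w : M.W) (g : ℕ → M.U),
      M.IsAssignment w g → M.Forces w g φ → M.Forces w g ψ := by
  induction h with
  | topIntro => exact fun _ _ _ _ _ _ => trivial
  | refl => exact fun _ _ _ _ _ hφ => hφ
  | andE₁ => exact fun _ _ _ _ _ hφψ => hφψ.1
  | andE₂ => exact fun _ _ _ _ _ hφψ => hφψ.2
  | andI _ _ ih₁ ih₂ => exact fun M hM w g hg hφ => ⟨ih₁ M hM w g hg hφ, ih₂ M hM w g hg hφ⟩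
  | cut _ _ ih₁ ih₂ => exact fun M hM w g hg hφ => ih₂ M hM w g hg (ih₁ M hM w g hg hφ)
  | nec _ ih => exact Formula.Entails.dia ih
  | diaTrans φ => exact Formula.entails_dia_dia φ
  | diaAll x φ => exact Formula.entails_dia_all x φ
  | allR _ hx ih => exact Formula.Entails.all_right ih hx
  | allL _ hφ ih => exact Formula.Entails.all_left ih hφ
  | termInst _ hφ hψ ih => exact Formula.Entails.subst ih hφ hψ
  | constGen _ hφ hψ ih => exact Formula.Entails.of_subst_const ih hφ hψ
end

section
/- Pair existence lemma for QRC₁: let Σ be a signature with a finite set of constants C, and Φ a finite set of closed formulas in the language of Σ. If p is a Cl_C(Φ)-maximal consistent and fully witnessed pair and ◇φ ∈ p⁺, then there exist a finite set of constants D ⊇ C and a Cl_D(Φ)-maximal consistent and fully witnessed pair q such that pR̂q, φ ∈ q⁺, and mdepth(q⁺) < mdepth(p⁺). -/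
/-!
The successor `q` splits `Cl_D(Φ)` into the consequences and the non-consequences of `φ`; such
a split is consistent, and maximal because it exhausts `Cl_D(Φ)`. Derivations never raise modal
depth, so `φ ⊬ ◇φ` and `mdepth(q⁺) ≤ mdepth φ < mdepth(◇φ)`; and `p R̂ q` because `φ ⊢ ψ` or
`φ ⊢ ◇ψ` would give `◇φ ⊢ ◇ψ` inside `p`. For full witnessing, `D` adds to `C` more fresh
constants than any formula of `Φ` has symbols, so each `∀x ψ` in the closure has an instance
`ψ[x/c]` in the closure with `c` fresh for `ψ` and for the closed formula `φ`; then
`φ ⊢ ψ[x/c]` would give `φ ⊢ ∀x ψ` by generalisation on `c`.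
-/

namespace Term

variable {Sig : Signature}

theorem fv_subst_const_subset (t : Term Sig) (x : ℕ) (c : Sig.Const) :
    (t.subst x (.const c)).fv ⊆ t.fv \ {x} := by
  cases t with
  | var y => by_cases h : y = x <;> simp [subst, fv, h]
  | const d => simp [subst, fv]

theorem consts_subst_const_subset (t : Term Sig) (x : ℕ) (c : Sig.Const) :
    (t.subst x (.const c)).consts ⊆ insert c t.consts := by
  cases t with
  | var y => by_cases h : y = x <;> simp [subst, consts, h]
  | const d => simp [subst, consts]

theorem subst_eq_self {t : Term Sig} {x : ℕ} (h : x ∉ t.fv) (u : Term Sig) :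
    t.subst x u = t := by
  cases t with
  | var y => simp_all [subst, fv, eq_comm]
  | const d => rfl

end Term

namespace Formula

variable {Sig : Signature}

theorem mdepth_subst (φ : Formula Sig) (x : ℕ) (t : Term Sig) :
    (φ.subst x t).mdepth = φ.mdepth := by
  induction φ with
  | top | rel => rfl
  | and φ ψ ihφ ihψ => simp [subst, mdepth, ihφ, ihψ]
  | dia φ ih => simp [subst, mdepth, ih]
  | all y φ ih => by_cases h : y = x <;> simp [subst, mdepth, h, ih]

theorem fv_subst_const_subset (φ : Formula Sig) (x : ℕ) (c : Sig.Const) :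
    (φ.subst x (.const c)).fv ⊆ φ.fv \ {x} := by
  induction φ with
  | top => simp [subst, fv]
  | rel S ts =>
      exact Set.iUnion_subset fun i => (Term.fv_subst_const_subset _ _ _).trans
        (Set.sdiff_subset_sdiff_left (Set.subset_iUnion (fun j => (ts j).fv) i))
  | and φ ψ ihφ ihψ =>
      simp only [subst, fv, Set.union_sdiff_distrib]
      exact Set.union_subset_union ihφ ihψ
  | dia φ ih => exact ih
  | all y φ ih =>
      by_cases h : y = x
      · subst h
        simp [subst, fv]
      · simp only [subst, if_neg h, fv]
        rw [Set.sdiff_sdiff_comm]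
        exact Set.sdiff_subset_sdiff_left ih

theorem consts_subst_const_subset (φ : Formula Sig) (x : ℕ) (c : Sig.Const) :
    (φ.subst x (.const c)).consts ⊆ insert c φ.consts := by
  induction φ with
  | top => simp [subst, consts]
  | rel S ts =>
      exact Set.iUnion_subset fun i => (Term.consts_subst_const_subset _ _ _).trans
        (Set.insert_subset_insert (Set.subset_iUnion (fun j => (ts j).consts) i))
  | and φ ψ ihφ ihψ =>
      simp only [subst, consts, Set.insert_union_distrib]
      exact Set.union_subset_union ihφ ihψ
  | dia φ ih => exact ih
  | all y φ ih =>
      by_cases h : y = x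
      · simp only [subst, if_pos h]
        exact Set.subset_insert _ _
      · simp only [subst, if_neg h, consts]
        exact ih

theorem subst_eq_self {φ : Formula Sig} {x : ℕ} (h : x ∉ φ.fv) (u : Term Sig) :
    φ.subst x u = φ := by
  induction φ with
  | top => rfl
  | rel S ts =>
      simp only [fv, Set.mem_iUnion, not_exists] at h
      simp only [subst, fun i => Term.subst_eq_self (h i) u]
  | and φ ψ ihφ ihψ =>
      simp only [fv, Set.mem_union, not_or] at h
      simp [subst, ihφ h.1, ihψ h.2]
  | dia φ ih => simp [subst, ih h]
  | all y φ ih =>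
      by_cases hyx : y = x
      · simp [subst, hyx]
      · have : x ∉ φ.fv := fun hx => h ⟨hx, Ne.symm hyx⟩
        simp [subst, hyx, ih this]

end Formula

section Closure

variable {Sig : Signature} {C : Set Sig.Const}

/-- The clauses of `Cl` as a one-step relation: `ClStep C χ θ` when the clause for `θ` includes
`Cl C χ` in `Cl C θ`. -/
inductive ClStep (C : Set Sig.Const) : Formula Sig → Formula Sig → Prop
  | rel (S : Sig.Rel) (ts : Fin (Sig.arity S) → Term Sig) : ClStep C .top (.rel S ts)
  | andLeft (φ ψ : Formula Sig) : ClStep C φ (.and φ ψ)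
  | andRight (φ ψ : Formula Sig) : ClStep C ψ (.and φ ψ)
  | dia (φ : Formula Sig) : ClStep C φ (.dia φ)
  | all (x : ℕ) (φ : Formula Sig) {c : Sig.Const} : c ∈ C →
      ClStep C (φ.subst x (.const c)) (.all x φ)

theorem ClStep.mono {D : Set Sig.Const} (hCD : C ⊆ D) {χ θ : Formula Sig}
    (h : ClStep C χ θ) : ClStep D χ θ := by
  cases h with
  | all x φ hc => exact .all x φ (hCD hc)
  | _ => constructor

theorem mem_Cl_self (θ : Formula Sig) : θ ∈ Cl C θ := by
  cases θ <;> simp [Cl]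

theorem ClStep.Cl_subset {χ θ : Formula Sig} (h : ClStep C χ θ) : Cl C χ ⊆ Cl C θ := by
  intro ψ hψ
  cases h with
  | rel S ts => simp_all [Cl]
  | andLeft | andRight | dia => simp [Cl, hψ]
  | all x φ hc => simp only [Cl, Set.mem_union, Set.mem_iUnion]; exact Or.inr ⟨_, hc, hψ⟩

theorem reflTransGen_of_mem_Cl : ∀ {θ χ : Formula Sig}, χ ∈ Cl C θ →
    Relation.ReflTransGen (ClStep C) χ θ
  | .top, χ, h => by
      simp only [Cl, Set.mem_singleton_iff] at h
      exact h ▸ .refl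
  | .rel S ts, χ, h => by
      simp only [Cl, Set.mem_insert_iff, Set.mem_singleton_iff] at h
      rcases h with rfl | rfl
      exacts [.refl, .single (.rel S ts)]
  | .and φ ψ, χ, h => by
      simp only [Cl, Set.mem_union, Set.mem_singleton_iff] at h
      rcases h with (rfl | h) | h
      exacts [.refl, (reflTransGen_of_mem_Cl h).tail (.andLeft φ ψ),
        (reflTransGen_of_mem_Cl h).tail (.andRight φ ψ)]
  | .dia φ, χ, h => by
      simp only [Cl, Set.mem_union, Set.mem_singleton_iff] at h
      rcases h with rfl | h
      exacts [.refl, (reflTransGen_of_mem_Cl h).tail (.dia φ)]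
  | .all x φ, χ, h => by
      simp only [Cl, Set.mem_union, Set.mem_singleton_iff, Set.mem_iUnion] at h
      rcases h with rfl | ⟨c, hc, h⟩
      exacts [.refl, (reflTransGen_of_mem_Cl h).tail (.all x φ hc)]
termination_by θ => θ.size
decreasing_by all_goals simp only [Formula.size, Formula.size_subst]; omega

theorem mem_Cl_iff {χ θ : Formula Sig} :
    χ ∈ Cl C θ ↔ Relation.ReflTransGen (ClStep C) χ θ := by
  refine ⟨reflTransGen_of_mem_Cl, fun h => ?_⟩
  suffices Cl C χ ⊆ Cl C θ from this (mem_Cl_self χ)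
  induction h with
  | refl => exact subset_rfl
  | tail _ hstep ih => exact ih.trans hstep.Cl_subset

theorem ClStep.mem_Cl {χ ψ θ : Formula Sig} (hstep : ClStep C χ ψ) (h : ψ ∈ Cl C θ) :
    χ ∈ Cl C θ :=
  mem_Cl_iff.2 ((mem_Cl_iff.1 h).head hstep)

theorem Cl_mono {D : Set Sig.Const} (hCD : C ⊆ D) (θ : Formula Sig) : Cl C θ ⊆ Cl D θ :=
  fun _ h =>
    mem_Cl_iff.2 (Relation.ReflTransGen.mono (fun _ _ => ClStep.mono hCD) _ _ (mem_Cl_iff.1 h))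

theorem le_of_mem_Cl {α : Type*} [Preorder α] {f : Formula Sig → α}
    (hf : ∀ χ θ, ClStep C χ θ → f χ ≤ f θ) {χ θ : Formula Sig} (h : χ ∈ Cl C θ) :
    f χ ≤ f θ := by
  replace h := mem_Cl_iff.1 h
  induction h with
  | refl => exact le_rfl
  | tail _ hstep ih => exact ih.trans (hf _ _ hstep)

theorem mdepth_le_of_mem_Cl {χ θ : Formula Sig} (h : χ ∈ Cl C θ) :
    χ.mdepth ≤ θ.mdepth := by
  refine le_of_mem_Cl (fun χ θ hstep => ?_) h
  cases hstep <;> simp [Formula.mdepth, Formula.mdepth_subst]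

theorem fv_subset_of_mem_Cl {χ θ : Formula Sig} (h : χ ∈ Cl C θ) : χ.fv ⊆ θ.fv := by
  refine le_of_mem_Cl (fun χ θ hstep => ?_) h
  cases hstep with
  | all x φ => exact Formula.fv_subst_const_subset φ x _
  | _ => simp [Formula.fv]

theorem consts_subset_of_mem_Cl {χ θ : Formula Sig} (h : χ ∈ Cl C θ) :
    χ.consts ⊆ θ.consts ∪ C := by
  refine le_of_mem_Cl (f := fun χ => χ.consts ∪ C) (fun χ θ hstep => ?_) h
    |>.trans' Set.subset_union_left
  cases hstep with
  | all x φ hc =>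
      refine Set.union_subset ((Formula.consts_subst_const_subset φ x _).trans ?_)
        Set.subset_union_right
      exact Set.insert_subset (Or.inr hc) Set.subset_union_left
  | _ =>
      intro z
      simp only [Formula.consts, Set.mem_union, Set.mem_iUnion, Set.mem_empty_iff_false]
      tauto

/-- Along a chain of `ClStep`s each `∀`-step uses up one unit of size and introduces at most one
new constant. -/
theorem exists_finset_consts_subset_of_mem_Cl {χ θ : Formula Sig} (h : χ ∈ Cl C θ) :
    ∃ F : Finset Sig.Const, χ.consts ⊆ θ.consts ∪ F ∧ F.card + χ.size ≤ θ.size := by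
  classical
  replace h := mem_Cl_iff.1 h
  induction h with
  | refl => exact ⟨∅, by simp, by simp⟩
  | @tail ψ θ _ hstep ih =>
      obtain ⟨F, hF, hcard⟩ := ih
      obtain ⟨G, hG, hGcard⟩ : ∃ G : Finset Sig.Const,
          ψ.consts ⊆ θ.consts ∪ G ∧ G.card + ψ.size ≤ θ.size := by
        cases hstep with
        | @all x φ c _ =>
            refine ⟨{c}, (Formula.consts_subst_const_subset φ x c).trans ?_, ?_⟩
            · simp [Formula.consts]
            · simp [Formula.size, Formula.size_subst, add_comm]
        | _ =>
            refine ⟨∅, by simp [Formula.consts], ?_⟩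
            simp only [Finset.card_empty, Formula.size]
            omega
      refine ⟨G ∪ F, ?_, ?_⟩
      · intro z hz
        rcases hF hz with hz | hz
        · rcases hG hz with hz | hz
          exacts [Or.inl hz, Or.inr (Finset.mem_union_left _ hz)]
        · exact Or.inr (Finset.mem_union_right _ hz)
      · have := Finset.card_union_le G F
        omega

end Closure

section ClosureOfSets

variable {Sig : Signature} {C : Set Sig.Const} {Φ : Set (Formula Sig)}

theorem mem_ClSet_iff {χ : Formula Sig} : χ ∈ ClSet C Φ ↔ ∃ θ ∈ Φ, χ ∈ Cl C θ := by
  simp [ClSet]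

theorem ClSet_mono {D : Set Sig.Const} (hCD : C ⊆ D) : ClSet C Φ ⊆ ClSet D Φ :=
  Set.biUnion_mono subset_rfl fun θ _ => Cl_mono hCD θ

theorem ClStep.mem_ClSet {χ ψ : Formula Sig} (hstep : ClStep C χ ψ) (h : ψ ∈ ClSet C Φ) :
    χ ∈ ClSet C Φ := by
  obtain ⟨θ, hθ, h⟩ := mem_ClSet_iff.1 h
  exact mem_ClSet_iff.2 ⟨θ, hθ, hstep.mem_Cl h⟩

theorem fv_eq_empty_of_mem_ClSet (hΦ : ∀ θ ∈ Φ, θ.fv = ∅) {χ : Formula Sig}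
    (h : χ ∈ ClSet C Φ) : χ.fv = ∅ := by
  obtain ⟨θ, hθ, h⟩ := mem_ClSet_iff.1 h
  exact Set.subset_empty_iff.1 (hΦ θ hθ ▸ fv_subset_of_mem_Cl h)

theorem consts_subset_of_mem_ClSet (hΦ : ∀ θ ∈ Φ, θ.consts ⊆ C) {χ : Formula Sig}
    (h : χ ∈ ClSet C Φ) : χ.consts ⊆ C := by
  obtain ⟨θ, hθ, h⟩ := mem_ClSet_iff.1 h
  exact (consts_subset_of_mem_Cl h).trans (Set.union_subset (hΦ θ hθ) subset_rfl)

theorem bddAbove_mdepth_ClSet (hΦ : Φ.Finite) : BddAbove (Formula.mdepth '' ClSet C Φ) := by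
  obtain ⟨n, hn⟩ := (hΦ.image Formula.mdepth).bddAbove
  refine ⟨n, ?_⟩
  rintro _ ⟨χ, hχ, rfl⟩
  obtain ⟨θ, hθ, h⟩ := mem_ClSet_iff.1 hχ
  exact (mdepth_le_of_mem_Cl h).trans (hn ⟨θ, hθ, rfl⟩)

theorem exists_fresh_instances [Infinite Sig.Const] (hC : C.Finite) (hΦfin : Φ.Finite)
    (hΦ : ∀ θ ∈ Φ, θ.consts ⊆ C) :
    ∃ D, C ⊆ D ∧ D.Finite ∧ ∀ (x : ℕ) (ψ : Formula Sig), .all x ψ ∈ ClSet D Φ →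
      ∃ c ∉ C, ψ.subst x (.const c) ∈ ClSet D Φ ∧ c ∉ ψ.consts := by
  classical
  obtain ⟨n, hn⟩ := (hΦfin.image Formula.size).bddAbove
  obtain ⟨E, hEC, hEcard⟩ := hC.infinite_compl.exists_subset_card_eq (n + 1)
  refine ⟨C ∪ E, Set.subset_union_left, hC.union E.finite_toSet, fun x ψ hψ => ?_⟩
  obtain ⟨θ, hθ, hψθ⟩ := mem_ClSet_iff.1 hψ
  obtain ⟨F, hF, hFcard⟩ := exists_finset_consts_subset_of_mem_Cl hψθ
  have : F.card < E.card := by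
    have := hn ⟨θ, hθ, rfl⟩
    simp only [Formula.size] at hFcard
    omega
  obtain ⟨c, hcE, hcF⟩ := Finset.exists_mem_notMem_of_card_lt_card this
  have hcC : c ∉ C := hEC hcE
  refine ⟨c, hcC, ?_, fun hc => ?_⟩
  · exact (ClStep.all x ψ (Or.inr hcE)).mem_ClSet hψ
  · rcases hF hc with hc | hc
    exacts [hcC (hΦ θ hθ hc), hcF hc]

end ClosureOfSets

section Derivations

variable {Sig : Signature}

theorem Derives.mdepth_le {φ ψ : Formula Sig} (h : Derives φ ψ) : ψ.mdepth ≤ φ.mdepth := by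
  induction h with
  | andI _ _ ih₁ ih₂ => exact max_le ih₁ ih₂
  | cut _ _ ih₁ ih₂ => exact ih₂.trans ih₁
  | nec _ ih => exact Nat.succ_le_succ ih
  | allL _ _ ih => exact ih.trans (Formula.mdepth_subst _ _ _).le
  | termInst _ _ _ ih => simpa only [Formula.mdepth_subst] using ih
  | constGen _ _ _ ih => simpa only [Formula.mdepth_subst] using ih
  | allR _ _ ih => exact ih
  | _ => simp [Formula.mdepth]

theorem not_derives_dia_self (φ : Formula Sig) : ¬ Derives φ (.dia φ) := fun h => by
  simpa [Formula.mdepth] using h.mdepth_le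

theorem Derives.all_of_subst_const {φ ψ : Formula Sig} {x : ℕ} {c : Sig.Const}
    (h : Derives φ (ψ.subst x (.const c))) (hx : x ∉ φ.fv) (hφ : c ∉ φ.consts)
    (hψ : c ∉ ψ.consts) : Derives φ (.all x ψ) :=
  .allR (.constGen (by rwa [Formula.subst_eq_self hx]) hφ hψ) hx

theorem Derives.foldl_and {φ γ : Formula Sig} {l : List (Formula Sig)} (hγ : Derives φ γ)
    (hl : ∀ δ ∈ l, Derives φ δ) : Derives φ (l.foldl .and γ) := by
  induction l generalizing γ with
  | nil => exact hγ
  | cons δ l ih =>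
      exact ih (.andI hγ (hl δ List.mem_cons_self)) fun δ' h => hl δ' (List.mem_cons_of_mem _ h)

theorem SetDerives.of_mem {Γ : Set (Formula Sig)} {γ δ : Formula Sig} (hγ : γ ∈ Γ)
    (h : Derives γ δ) : SetDerives Γ δ :=
  ⟨γ, [], hγ, by simp, h⟩

theorem SetDerives.derives {Γ : Set (Formula Sig)} {φ δ : Formula Sig}
    (hΓ : ∀ γ ∈ Γ, Derives φ γ) (h : SetDerives Γ δ) : Derives φ δ := by
  obtain ⟨γ, l, hγ, hl, hδ⟩ := h
  exact .cut (.foldl_and (hΓ γ hγ) fun δ' h => hΓ δ' (hl δ' h)) hδ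

theorem Pair.Consistent.notMem_neg {p : Pair Sig} (hp : p.Consistent) {χ : Formula Sig}
    (h : χ ∈ p.pos) : χ ∉ p.neg :=
  fun hn => hp χ hn (.of_mem h (.refl χ))

end Derivations

section ModalDepth

variable {Sig : Signature} {Γ : Set (Formula Sig)}

theorem mdepthSet_le {n : ℕ} (h : ∀ χ ∈ Γ, χ.mdepth ≤ n) : mdepthSet Γ ≤ n :=
  csSup_le' (by rintro _ ⟨χ, hχ, rfl⟩; exact h χ hχ)

theorem le_mdepthSet (hΓ : BddAbove (Formula.mdepth '' Γ)) {χ : Formula Sig} (h : χ ∈ Γ) :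
    χ.mdepth ≤ mdepthSet Γ :=
  le_csSup hΓ ⟨χ, h, rfl⟩

end ModalDepth

namespace Pair

variable {Sig : Signature} {Ψ : Set (Formula Sig)} {φ : Formula Sig}

def consequences (Ψ : Set (Formula Sig)) (φ : Formula Sig) : Pair Sig :=
  ⟨{χ ∈ Ψ | Derives φ χ}, {χ ∈ Ψ | ¬ Derives φ χ}⟩

theorem consequences_maxCons : (consequences Ψ φ).MaxCons Ψ := by
  have hcons : (consequences Ψ φ).Consistent := fun δ hδ h =>
    hδ.2 (h.derives fun _ hγ => hγ.2)
  refine ⟨hcons, fun _ h => h.1, fun _ h => h.1, ?_⟩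
  rintro ⟨pos, neg⟩ ⟨hpos, hposΨ, hneg, hnegΨ⟩ hq
  have hpos' : pos = {χ ∈ Ψ | Derives φ χ} := Set.Subset.antisymm
    (fun χ hχ => ⟨hposΨ hχ, by_contra fun h => hq.notMem_neg hχ (hneg ⟨hposΨ hχ, h⟩)⟩)
    hpos
  have hneg' : neg = {χ ∈ Ψ | ¬ Derives φ χ} := Set.Subset.antisymm
    (fun χ hχ => ⟨hnegΨ hχ, fun h => hq.notMem_neg (hpos ⟨hnegΨ hχ, h⟩) hχ⟩) hneg
  rw [hpos', hneg']
  rfl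

theorem consequences_fullyWitnessed (hφ : φ.fv = ∅)
    (hfresh : ∀ (x : ℕ) (ψ : Formula Sig), .all x ψ ∈ Ψ →
      ∃ c ∉ φ.consts, ψ.subst x (.const c) ∈ Ψ ∧ c ∉ ψ.consts) :
    (consequences Ψ φ).FullyWitnessed := by
  rintro x ψ ⟨hψ, hnd⟩
  obtain ⟨c, hcφ, hmem, hcψ⟩ := hfresh x ψ hψ
  exact ⟨c, hmem, fun h => hnd (h.all_of_subst_const (by simp [hφ]) hcφ hcψ)⟩

theorem consequences_pos_mdepthSet_le : mdepthSet (consequences Ψ φ).pos ≤ φ.mdepth :=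
  mdepthSet_le fun _ hχ => hχ.2.mdepth_le

end Pair

theorem hatR_consequences {Sig : Signature} {p : Pair Sig} {Ψ : Set (Formula Sig)}
    {φ : Formula Sig} (hp : p.Consistent) (hφ : .dia φ ∈ p.pos) (hφΨ : .dia φ ∈ Ψ)
    (hneg : p.neg ⊆ Ψ) (hΨ : ∀ ψ, .dia ψ ∈ Ψ → ψ ∈ Ψ) :
    hatR p (Pair.consequences Ψ φ) := by
  refine ⟨fun ψ hψ => ⟨⟨hΨ ψ (hneg hψ), fun h => ?_⟩, ⟨hneg hψ, fun h => ?_⟩⟩,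
    ⟨φ, hφ, hφΨ, not_derives_dia_self φ⟩⟩
  · exact hp _ hψ (.of_mem hφ (.nec h))
  · exact hp _ hψ (.of_mem hφ (.cut (.nec h) (.diaTrans ψ)))

theorem qrc1_pair_existence_general (Sig : Signature) [Infinite Sig.Const]
    (C : Set Sig.Const) (hC : C.Finite)
    (Φ : Set (Formula Sig)) (hΦfin : Φ.Finite)
    (hΦ : ∀ χ ∈ Φ, χ.fv = ∅ ∧ χ.consts ⊆ C)
    (p : Pair Sig) (hp : p.MaxCons (ClSet C Φ))
    (φ : Formula Sig) (hφ : Formula.dia φ ∈ p.pos) :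
    ∃ (D : Set Sig.Const) (q : Pair Sig),
      C ⊆ D ∧ D.Finite ∧ q.MaxCons (ClSet D Φ) ∧ q.FullyWitnessed ∧
      hatR p q ∧ φ ∈ q.pos ∧ mdepthSet q.pos < mdepthSet p.pos := by
  obtain ⟨hcons, hpos, hneg, -⟩ := hp
  have hφC : φ ∈ ClSet C Φ := (ClStep.dia φ).mem_ClSet (hpos hφ)
  have hφfv : φ.fv = ∅ := fv_eq_empty_of_mem_ClSet (fun θ h => (hΦ θ h).1) hφC
  have hφconsts : φ.consts ⊆ C := consts_subset_of_mem_ClSet (fun θ h => (hΦ θ h).2) hφC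
  obtain ⟨D, hCD, hD, hfresh⟩ := exists_fresh_instances hC hΦfin fun θ h => (hΦ θ h).2
  have hmono : ClSet C Φ ⊆ ClSet D Φ := ClSet_mono hCD
  refine ⟨D, .consequences (ClSet D Φ) φ, hCD, hD, Pair.consequences_maxCons,
    Pair.consequences_fullyWitnessed hφfv fun x ψ h => ?_,
    hatR_consequences hcons hφ (hmono (hpos hφ)) (hneg.trans hmono)
      fun ψ => (ClStep.dia ψ).mem_ClSet,
    ⟨hmono hφC, .refl φ⟩, ?_⟩
  · obtain ⟨c, hcC, hc⟩ := hfresh x ψ h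
    exact ⟨c, fun h => hcC (hφconsts h), hc⟩
  · calc mdepthSet (Pair.consequences (ClSet D Φ) φ).pos
        ≤ φ.mdepth := Pair.consequences_pos_mdepthSet_le
      _ < (Formula.dia φ).mdepth := Nat.lt_succ_self _
      _ ≤ mdepthSet p.pos := le_mdepthSet ((bddAbove_mdepth_ClSet hΦfin).mono
          (Set.image_mono hpos)) hφ

/-- Pair existence lemma for QRC₁: if p is Cl_C(Φ)-maximal consistent and
fully witnessed with ◇φ ∈ p⁺, then there are a finite D ⊇ C and a Cl_D(Φ)-maximal
consistent fully witnessed pair q with pR̂q, φ ∈ q⁺, and mdepth(q⁺) < mdepth(p⁺). -/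
theorem qrc1_pair_existence (Sig : Signature) [Infinite Sig.Const]
    (C : Set Sig.Const) (hC : C.Finite)
    (Φ : Set (Formula Sig)) (hΦfin : Φ.Finite)
    (hΦ : ∀ χ ∈ Φ, χ.fv = ∅ ∧ χ.consts ⊆ C)
    (p : Pair Sig) (hp : p.MaxCons (ClSet C Φ)) (hwit : p.FullyWitnessed)
    (φ : Formula Sig) (hφ : Formula.dia φ ∈ p.pos) :
    ∃ (D : Set Sig.Const) (q : Pair Sig),
      C ⊆ D ∧ D.Finite ∧ q.MaxCons (ClSet D Φ) ∧ q.FullyWitnessed ∧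
      hatR p q ∧ φ ∈ q.pos ∧ mdepthSet q.pos < mdepthSet p.pos :=
  qrc1_pair_existence_general Sig C hC Φ hΦfin hΦ p hp φ hφ
end
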